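/- arXiv:math/9804059 — 2 statements merged into one kernel-verified Lean document; each statement's English description precedes it below -/
import Mathlib

section
/- Let V be a finite-dimensional complex vector space and let ω₁,...,ω_v be 2-forms on V (elements of Λ²V*), each of the form ω_i = dx_i ∧ dy_i for covectors x_i, y_i ∈ V*, such that ω_i ∧ ω_j = 0 for all i, j. Then the span of {x_1,...,x_v, y_1,...,y_v} in V* has dimension at most v+1. -/
/-!
Write `P i` for the span of `x i` and `y i`. As `ωᵢ ∧ ωⱼ = 0`, the covectors `x i, y i, x j, y j`
are linearly dependent, so `dim (P i + P j) ≤ 3`. Take `P i₀` of maximal dimension. Every other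
`P i` adds at most one dimension to it: if `P i₀` is a plane, then `P i₀ ∩ P i ≠ 0`; otherwise all
the `P i` are at most lines. By submodularity of dimension these increments add up, so the span
has dimension at most `2 + (v - 1)`.
-/

open Module Submodule

namespace ExteriorAlgebra

variable {K E : Type*} [Field K] [AddCommGroup E] [Module K E]

theorem ιMulti_ne_zero_of_linearIndependent {n : ℕ} {v : Fin n → E}
    (hv : LinearIndependent K v) : ιMulti K n v ≠ 0 := by
  have := (exteriorPower.ιMulti_family_linearIndependent_field (n := n) hv).ne_zero
    (Set.powersetCard.ofFinEmbEquiv (RelEmbedding.refl (· ≤ ·)))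
  rw [← exteriorPower.ιMulti_apply_coe, ne_eq, ZeroMemClass.coe_eq_zero]
  simpa [exteriorPower.ιMulti_family] using this

theorem not_linearIndependent_of_ι_mul_ι_mul_ι_mul_ι_eq_zero {a b c d : E}
    (h : ι K a * ι K b * (ι K c * ι K d) = 0) : ¬ LinearIndependent K ![a, b, c, d] := by
  intro hv
  apply ιMulti_ne_zero_of_linearIndependent hv
  simpa [ιMulti_apply, List.ofFn_succ, mul_assoc] using h

end ExteriorAlgebra

section

variable {K M : Type*} [Field K] [AddCommGroup M] [Module K M]

theorem finrank_span_range_lt_card_of_not_linearIndependent {ι : Type*} [Fintype ι] {b : ι → M}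
    (hb : ¬ LinearIndependent K b) : finrank K (span K (Set.range b)) < Fintype.card ι :=
  (finrank_range_le_card b).lt_of_ne (mt linearIndependent_iff_card_eq_finrank_span.mpr hb ∘ .symm)

theorem span_range_union_range_eq_iSup {ι : Type*} (x y : ι → M) :
    span K (Set.range x ∪ Set.range y) = ⨆ i, span K (Set.range ![x i, y i]) := by
  simp only [span_union, span_range_eq_iSup, Matrix.range_cons, Matrix.range_empty,
    Set.union_empty, iSup_sup_eq]

theorem finrank_span_pair_sup_span_pair_le_three {a b c d : M}
    (h : ExteriorAlgebra.ι K a * ExteriorAlgebra.ι K b *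
      (ExteriorAlgebra.ι K c * ExteriorAlgebra.ι K d) = 0) :
    finrank K ↥(span K (Set.range ![a, b]) ⊔ span K (Set.range ![c, d])) ≤ 3 := by
  have hspan : span K (Set.range ![a, b]) ⊔ span K (Set.range ![c, d]) =
      span K (Set.range ![a, b, c, d]) := by
    simp only [← span_union, Matrix.range_cons, Matrix.range_empty, Set.union_empty,
      Set.union_assoc]
  have := finrank_span_range_lt_card_of_not_linearIndependent
    (ExteriorAlgebra.not_linearIndependent_of_ι_mul_ι_mul_ι_mul_ι_eq_zero h)
  rw [hspan]
  simpa [Nat.lt_succ_iff] using this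

variable [FiniteDimensional K M]

namespace Submodule

theorem finrank_sup_add_finrank_le_of_le {A C : Submodule K M} (hAC : A ≤ C)
    (B : Submodule K M) :
    finrank K ↥(C ⊔ B) + finrank K A ≤ finrank K C + finrank K ↥(A ⊔ B) := by
  have hCB : C ⊔ B = C ⊔ (A ⊔ B) := by rw [← sup_assoc, sup_of_le_left hAC]
  have hA : finrank K A ≤ finrank K ↥(C ⊓ (A ⊔ B)) :=
    finrank_mono (le_inf hAC le_sup_left)
  have := finrank_sup_add_finrank_inf_eq C (A ⊔ B)
  rw [hCB]
  omega

theorem finrank_sup_biSup_le {ι : Type*} (A : Submodule K M) (B : ι → Submodule K M)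
    (s : Finset ι) (hB : ∀ i ∈ s, finrank K ↥(A ⊔ B i) ≤ finrank K A + 1) :
    finrank K ↥(A ⊔ ⨆ i ∈ s, B i) ≤ finrank K A + s.card := by
  classical
  induction s using Finset.induction_on with
  | empty =>
    rw [show ⨆ i ∈ (∅ : Finset ι), B i = ⊥ by simp, sup_bot_eq, Finset.card_empty, add_zero]
  | insert j s hj ih =>
    have hstep := finrank_sup_add_finrank_le_of_le
      (le_sup_left : A ≤ A ⊔ ⨆ i ∈ s, B i) (B j)
    have hBj := hB j (Finset.mem_insert_self j s)
    have ih := ih fun i hi => hB i (Finset.mem_insert_of_mem hi)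
    rw [Finset.iSup_insert, sup_left_comm, sup_comm (B j), Finset.card_insert_of_notMem hj]
    omega

theorem finrank_iSup_le_card_add_one {ι : Type*} [Fintype ι] (P : ι → Submodule K M)
    (hP : ∀ i, finrank K (P i) ≤ 2) (hPP : ∀ i j, finrank K ↥(P i ⊔ P j) ≤ 3) :
    finrank K ↥(⨆ i, P i) ≤ Fintype.card ι + 1 := by
  classical
  rcases isEmpty_or_nonempty ι with hι | hι
  · rw [iSup_of_empty, finrank_bot]
    exact Nat.zero_le _
  obtain ⟨i₀, hi₀⟩ := Finite.exists_max fun i => finrank K (P i)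
  have hstep : ∀ i ∈ Finset.univ.erase i₀, finrank K ↥(P i₀ ⊔ P i) ≤ finrank K (P i₀) + 1 := by
    intro i _
    have hpair := hPP i₀ i
    have hsum := finrank_add_le_finrank_add_finrank (P i₀) (P i)
    have hi₀_le := hP i₀
    have hmax := hi₀ i
    omega
  have hsplit : ⨆ i, P i = P i₀ ⊔ ⨆ i ∈ Finset.univ.erase i₀, P i := by
    rw [← Finset.iSup_insert, Finset.insert_erase (Finset.mem_univ i₀)]
    simp
  have hbound := finrank_sup_biSup_le (P i₀) P _ hstep
  rw [Finset.card_erase_of_mem (Finset.mem_univ i₀), Finset.card_univ] at hbound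
  have hi₀_le := hP i₀
  have hcard := Fintype.card_pos (α := ι)
  rw [hsplit]
  omega

end Submodule

end

/-- Let `V` be a finite-dimensional complex vector space and let
`ω₁, …, ω_v` be 2-forms on `V` (elements of `Λ²V*`), each of the form
`ω_i = dx_i ∧ dy_i` for covectors `x_i, y_i ∈ V*`, such that `ω_i ∧ ω_j = 0`
for all `i, j`.  Then the span of `{x_1,…,x_v, y_1,…,y_v}` in `V*` has
dimension at most `v + 1`.  (Wedge products are taken in the exterior algebra
of `V*`.) -/
theorem stmt_0 {V : Type*} [AddCommGroup V] [Module ℂ V] [FiniteDimensional ℂ V]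
    (v : ℕ) (x y : Fin v → Module.Dual ℂ V)
    (hrank2 : ∀ i j : Fin v,
      (ExteriorAlgebra.ι ℂ (x i) * ExteriorAlgebra.ι ℂ (y i)) *
        (ExteriorAlgebra.ι ℂ (x j) * ExteriorAlgebra.ι ℂ (y j)) = 0) :
    Module.finrank ℂ
      (Submodule.span ℂ (Set.range x ∪ Set.range y) : Submodule ℂ (Module.Dual ℂ V))
      ≤ v + 1 := by
  rw [span_range_union_range_eq_iSup]
  simpa using finrank_iSup_le_card_add_one _ (fun i => finrank_range_le_card ![x i, y i])
    fun i j => finrank_span_pair_sup_span_pair_le_three (hrank2 i j)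
end

section
/- Let V be a finite-dimensional complex vector space, and for i = 1,...,v let ω_i = x_i ∧ y_i with x_i, y_i ∈ V*, satisfying ω_i ∧ ω_j = 0 for all i,j. If the span of {x_1,...,x_v, y_1,...,y_v} has dimension exactly v+1, then there exist covectors φ_0, φ_1, ..., φ_v ∈ V* such that ω_i = φ_0 ∧ φ_i for every i. -/
open ExteriorAlgebra Module Submodule Set

section Helpers

variable {W : Type*} [AddCommGroup W] [Module ℂ W]

lemma exists_dual_family {n : ℕ} {f : Fin n → W} (hf : LinearIndependent ℂ f) :
    ∃ g : Fin n → Module.Dual ℂ W, ∀ i j, g i (f j) = if i = j then 1 else 0 := by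
  have key : ∀ i : Fin n, ∃ g : Module.Dual ℂ W,
      g (f i) = 1 ∧ ∀ j, j ≠ i → g (f j) = 0 := by
    intro i
    have hnm : f i ∉ span ℂ (f '' {i}ᶜ) :=
      hf.notMem_span_image (by simp)
    obtain ⟨g, hg1, hg2⟩ := Submodule.exists_dual_map_eq_bot_of_notMem hnm inferInstance
    refine ⟨(g (f i))⁻¹ • g, by simp [inv_mul_cancel₀ hg1], fun j hj => ?_⟩
    have : f j ∈ span ℂ (f '' {i}ᶜ) := subset_span ⟨j, by simp [hj], rfl⟩
    have hz : g (f j) = 0 := by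
      have := Submodule.map_le_iff_le_comap.1 hg2.le this
      simpa using this
    simp [hz]
  choose g hg1 hg2 using key
  exact ⟨g, fun i j => by
    by_cases h : i = j
    · subst h; simp [hg1]
    · simp [h, hg2 i j (Ne.symm h)]⟩

lemma iMulti_ne_zero {n : ℕ} {f : Fin n → W} (hf : LinearIndependent ℂ f) :
    ExteriorAlgebra.ιMulti ℂ n f ≠ 0 := by
  obtain ⟨g, hg⟩ := exists_dual_family hf
  classical
  let G : W →ₗ[ℂ] (Fin n → ℂ) := LinearMap.pi g
  let A : W [⋀^Fin n]→ₗ[ℂ] ℂ := (Matrix.detRowAlternating).compLinearMap G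
  let F : ∀ i : ℕ, W [⋀^Fin i]→ₗ[ℂ] ℂ := Function.update (fun _ => 0) n A
  intro h
  have h2 : ExteriorAlgebra.liftAlternating F (ExteriorAlgebra.ιMulti ℂ n f) = A f := by
    rw [ExteriorAlgebra.liftAlternating_apply_ιMulti]
    simp [F]
  rw [h] at h2
  simp only [map_zero] at h2
  have h3 : A f = 1 := by
    have : (fun i => G (f i)) = (1 : Matrix (Fin n) (Fin n) ℂ) := by
      ext i j
      simp [G, Matrix.one_apply, hg j i, eq_comm]
    simp only [A, AlternatingMap.compLinearMap_apply]
    rw [this]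
    exact Matrix.det_one
  rw [h3] at h2
  exact one_ne_zero h2.symm

lemma mul2 (a b : W) : ExteriorAlgebra.ιMulti ℂ 2 ![a, b] =
    ExteriorAlgebra.ι ℂ a * ExteriorAlgebra.ι ℂ b := by
  simp [ExteriorAlgebra.ιMulti_apply, List.ofFn_succ, mul_assoc]

lemma mul4 (a b c d : W) : ExteriorAlgebra.ιMulti ℂ 4 ![a, b, c, d] =
    ExteriorAlgebra.ι ℂ a * ExteriorAlgebra.ι ℂ b *
      (ExteriorAlgebra.ι ℂ c * ExteriorAlgebra.ι ℂ d) := by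
  simp [ExteriorAlgebra.ιMulti_apply, List.ofFn_succ, mul_assoc]

lemma dep_pair {a b : W} (h : ¬ LinearIndependent ℂ ![a, b]) :
    (∃ c : ℂ, a = c • b) ∨ (∃ c : ℂ, b = c • a) := by
  rw [LinearIndependent.pair_iff] at h
  push_neg at h
  obtain ⟨s, t, hst, hne⟩ := h
  by_cases hs : s = 0
  · subst hs
    have ht : t ≠ 0 := by tauto
    right
    refine ⟨0, ?_⟩
    have : t • b = 0 := by simpa using hst
    simp [smul_eq_zero.1 this |>.resolve_left ht]
  · left
    refine ⟨-(s⁻¹ * t), ?_⟩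
    have h1 : s • a = -(t • b) := eq_neg_of_add_eq_zero_left hst
    calc a = s⁻¹ • (s • a) := by rw [smul_smul, inv_mul_cancel₀ hs, one_smul]
      _ = s⁻¹ • (-(t • b)) := by rw [h1]
      _ = (-(s⁻¹ * t)) • b := by rw [smul_neg, smul_smul, neg_smul]

lemma wedge_zero_of_dep {a b : W} (h : ¬ LinearIndependent ℂ ![a, b]) :
    ExteriorAlgebra.ι ℂ a * ExteriorAlgebra.ι ℂ b = 0 := by
  rcases dep_pair h with ⟨c, rfl⟩ | ⟨c, rfl⟩ <;>
    simp [map_smul, smul_mul_assoc, mul_smul_comm, ExteriorAlgebra.ι_sq_zero]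

lemma wedge_repr {a b φ₀ : W} (hφ₀ : φ₀ ∈ Submodule.span ℂ {a, b}) (hne : φ₀ ≠ 0) :
    ∃ φ : W, ExteriorAlgebra.ι ℂ a * ExteriorAlgebra.ι ℂ b =
      ExteriorAlgebra.ι ℂ φ₀ * ExteriorAlgebra.ι ℂ φ := by
  rw [Submodule.mem_span_pair] at hφ₀
  obtain ⟨s, t, hst⟩ := hφ₀
  by_cases hs : s = 0
  · have ht : t ≠ 0 := by
      rintro rfl
      subst hs
      simp at hst
      exact hne hst.symm
    refine ⟨(-t⁻¹) • a, ?_⟩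
    rw [← hst]
    subst hs
    simp only [zero_smul, zero_add, map_smul, smul_mul_assoc, mul_smul_comm]
    rw [show (ExteriorAlgebra.ι ℂ b * ExteriorAlgebra.ι ℂ a) =
      -(ExteriorAlgebra.ι ℂ a * ExteriorAlgebra.ι ℂ b) from ?_]
    · rw [smul_smul, smul_neg, neg_mul, inv_mul_cancel₀ ht]
      simp
    · have := ExteriorAlgebra.ι_add_mul_swap (R := ℂ) a b
      linear_combination (norm := noncomm_ring) this
  · refine ⟨s⁻¹ • b, ?_⟩
    rw [← hst]
    simp only [map_add, map_smul, add_mul, smul_mul_assoc, mul_smul_comm, smul_smul,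
      ExteriorAlgebra.ι_sq_zero, inv_mul_cancel₀ hs, mul_inv_cancel₀]
    rw [smul_zero, add_zero, smul_smul, inv_mul_cancel₀ hs, one_smul]

lemma range_pair (a b : W) : Set.range ![a, b] = {a, b} := by
  ext w
  constructor
  · rintro ⟨i, rfl⟩
    fin_cases i <;> simp
  · intro hw
    rcases hw with rfl | rfl
    exacts [⟨0, rfl⟩, ⟨1, rfl⟩]

lemma range_quad (a b c d : W) : Set.range ![a, b, c, d] = {a, b, c, d} := by
  ext w
  constructor
  · rintro ⟨i, rfl⟩
    fin_cases i <;> simp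
  · intro hw
    rcases hw with rfl | rfl | rfl | rfl
    exacts [⟨0, rfl⟩, ⟨1, rfl⟩, ⟨2, rfl⟩, ⟨3, rfl⟩]

variable [FiniteDimensional ℂ W]

lemma plane_rank {a b : W} (h : LinearIndependent ℂ ![a, b]) :
    Module.finrank ℂ (Submodule.span ℂ ({a, b} : Set W)) = 2 := by
  have := finrank_span_eq_card h
  rw [range_pair] at this
  simpa using this

lemma inf_rank_ge {P Q : Submodule ℂ W} (hP : Module.finrank ℂ P = 2)
    (hQ : Module.finrank ℂ Q = 2) (hsup : Module.finrank ℂ ↥(P ⊔ Q) ≤ 3) :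
    1 ≤ Module.finrank ℂ ↥(P ⊓ Q) := by
  have := Submodule.finrank_sup_add_finrank_inf_eq P Q
  omega

lemma sub_ne_bot {P : Submodule ℂ W} (h : 1 ≤ Module.finrank ℂ P) :
    ∃ z ∈ P, z ≠ 0 := by
  rw [← Submodule.ne_bot_iff]
  intro hb
  rw [hb] at h
  simp [finrank_bot] at h

lemma eq_inf_of_rank {A B : Submodule ℂ W} (h : A ≤ B) (h1 : 1 ≤ Module.finrank ℂ A)
    (h2 : Module.finrank ℂ B ≤ 1) : A = B :=
  Submodule.eq_of_le_of_finrank_le h (h2.trans h1)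

lemma rank_inf_le_one {P T : Submodule ℂ W} (hP : Module.finrank ℂ P = 2)
    (hT : Module.finrank ℂ T = 3) (h4 : 4 ≤ Module.finrank ℂ ↥(P ⊔ T)) :
    Module.finrank ℂ ↥(P ⊓ T) ≤ 1 := by
  have := Submodule.finrank_sup_add_finrank_inf_eq P T
  omega

lemma rank_inf_three {P Q T : Submodule ℂ W} (hP : Module.finrank ℂ P = 2)
    (hQ : Module.finrank ℂ Q = 2) (hT : T = P ⊔ Q) (h3 : Module.finrank ℂ T = 3) :
    Module.finrank ℂ ↥(P ⊓ Q) = 1 := by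
  have := Submodule.finrank_sup_add_finrank_inf_eq P Q
  rw [← hT] at this
  omega

end Helpers

set_option maxHeartbeats 1000000 in
set_option synthInstance.maxHeartbeats 400000 in
/-- Let `V` be a finite-dimensional complex vector space, and for
`i = 1,…,v` let `ω_i = x_i ∧ y_i` with `x_i, y_i ∈ V*`, satisfying
`ω_i ∧ ω_j = 0` for all `i, j`.  If the span of `{x_1,…,x_v, y_1,…,y_v}` has
dimension exactly `v + 1`, then there exist covectors `φ_0, φ_1, …, φ_v ∈ V*`
such that `ω_i = φ_0 ∧ φ_i` for every `i`. -/
theorem stmt_1 {V : Type*} [AddCommGroup V] [Module ℂ V] [FiniteDimensional ℂ V]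
    (v : ℕ) (x y : Fin v → Module.Dual ℂ V)
    (hrank2 : ∀ i j : Fin v,
      (ExteriorAlgebra.ι ℂ (x i) * ExteriorAlgebra.ι ℂ (y i)) *
        (ExteriorAlgebra.ι ℂ (x j) * ExteriorAlgebra.ι ℂ (y j)) = 0)
    (hgen : Module.finrank ℂ
      (Submodule.span ℂ (Set.range x ∪ Set.range y) : Submodule ℂ (Module.Dual ℂ V))
      = v + 1) :
    ∃ (φ₀ : Module.Dual ℂ V) (φ : Fin v → Module.Dual ℂ V),
      ∀ i : Fin v,
        ExteriorAlgebra.ι ℂ (x i) * ExteriorAlgebra.ι ℂ (y i)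
          = ExteriorAlgebra.ι ℂ φ₀ * ExteriorAlgebra.ι ℂ (φ i) := by
  classical
  set P : Fin v → Submodule ℂ (Module.Dual ℂ V) := fun i => Submodule.span ℂ {x i, y i}
    with hPdef
  set S : Set (Fin v) := {i | LinearIndependent ℂ ![x i, y i]} with hSdef
  -- membership of generators
  have hxP : ∀ i, x i ∈ P i := fun i => subset_span (Set.mem_insert _ _)
  have hyP : ∀ i, y i ∈ P i := fun i => subset_span (Set.mem_insert_of_mem _ rfl)
  -- ranks of good planes
  have hP2 : ∀ i ∈ S, Module.finrank ℂ (P i) = 2 := fun i hi => plane_rank hi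
  -- pairwise sup small
  have hsup3 : ∀ i ∈ S, ∀ j ∈ S, Module.finrank ℂ ↥(P i ⊔ P j) ≤ 3 := by
    intro i hi j hj
    by_contra hc
    push_neg at hc
    have hsets : ({x i, y i} : Set (Module.Dual ℂ V)) ∪ {x j, y j}
        = {x i, y i, x j, y j} := by
      ext z
      simp only [Set.mem_union, Set.mem_insert_iff, Set.mem_singleton_iff]
      tauto
    have hPP : P i ⊔ P j = Submodule.span ℂ (Set.range ![x i, y i, x j, y j]) := by
      rw [range_quad]
      calc P i ⊔ P j
          = Submodule.span ℂ (({x i, y i} : Set (Module.Dual ℂ V)) ∪ {x j, y j}) :=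
            (Submodule.span_union _ _).symm
        _ = Submodule.span ℂ {x i, y i, x j, y j} := by rw [hsets]
    have hle4 : Module.finrank ℂ ↥(P i ⊔ P j) ≤ 4 := by
      have h := Submodule.finrank_add_le_finrank_add_finrank (P i) (P j)
      rw [hP2 i hi, hP2 j hj] at h
      exact h
    have h4 : Module.finrank ℂ ↥(P i ⊔ P j) = 4 := by omega
    have hind : LinearIndependent ℂ ![x i, y i, x j, y j] := by
      rw [linearIndependent_iff_card_eq_finrank_span]
      rw [Set.finrank, ← hPP, h4]
      simp
    have := iMulti_ne_zero hind
    rw [mul4] at this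
    exact this (hrank2 i j)
  -- pairwise intersections nontrivial
  have hinf1 : ∀ i ∈ S, ∀ j ∈ S, 1 ≤ Module.finrank ℂ ↥(P i ⊓ P j) :=
    fun i hi j hj => inf_rank_ge (hP2 i hi) (hP2 j hj) (hsup3 i hi j hj)
  have _hfin : FiniteDimensional ℂ (Module.Dual ℂ V) := inferInstance
  -- Main claim: there is φ₀ such that for all i ∈ S, φ₀ ≠ 0 and φ₀ ∈ P i
  have main : ∃ φ₀ : Module.Dual ℂ V, ∀ i ∈ S, φ₀ ≠ 0 ∧ φ₀ ∈ P i := by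
    by_cases hS : S = ∅
    · exact ⟨0, fun i hi => by rw [hS] at hi; exact absurd hi (Set.notMem_empty i)⟩
    · obtain ⟨i₀, hi₀⟩ := Set.nonempty_iff_ne_empty.2 hS
      by_cases hall : ∀ m ∈ S, P m = P i₀
      · refine ⟨x i₀, fun m hm => ⟨?_, ?_⟩⟩
        · have h0 : LinearIndependent ℂ ![x i₀, y i₀] := hi₀
          have h1 := h0.ne_zero 0
          simp only [Matrix.cons_val_zero] at h1
          exact h1
        · rw [hall m hm]; exact hxP i₀
      · push_neg at hall
        obtain ⟨j₀, hj₀S, hj₀ne⟩ := hall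
        set ℓ : Submodule ℂ (Module.Dual ℂ V) := P i₀ ⊓ P j₀ with hldef
        set T : Submodule ℂ (Module.Dual ℂ V) := P i₀ ⊔ P j₀ with hTdef
        have hT3 : Module.finrank ℂ T = 3 := by
          have h1 : Module.finrank ℂ T ≤ 3 := hsup3 i₀ hi₀ j₀ hj₀S
          have h2 : 2 ≤ Module.finrank ℂ T := by
            rw [← hP2 i₀ hi₀]
            exact Submodule.finrank_mono le_sup_left
          rcases Nat.lt_or_ge (Module.finrank ℂ T) 3 with h | h
          · exfalso
            apply hj₀ne
            have he : Module.finrank ℂ T ≤ Module.finrank ℂ (P i₀) := by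
              rw [hP2 i₀ hi₀]; omega
            have he2 : Module.finrank ℂ T ≤ Module.finrank ℂ (P j₀) := by
              rw [hP2 j₀ hj₀S]; omega
            have e1 : P i₀ = T := Submodule.eq_of_le_of_finrank_le le_sup_left he
            have e2 : P j₀ = T := Submodule.eq_of_le_of_finrank_le le_sup_right he2
            rw [e1, e2]
          · omega
        have hl1 : Module.finrank ℂ ℓ = 1 :=
          rank_inf_three (hP2 i₀ hi₀) (hP2 j₀ hj₀S) hTdef hT3
        -- key: any good plane not inside T meets T exactly in ℓ
        have key : ∀ m ∈ S, ¬ P m ≤ T → P m ⊓ T = ℓ := by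
          intro m hm hmT
          have hTlt : T < P m ⊔ T := by
            rcases lt_or_eq_of_le (le_sup_right : T ≤ P m ⊔ T) with h | h
            · exact h
            · exact absurd (h ▸ (le_sup_left : P m ≤ P m ⊔ T)) hmT
          have h4 : 4 ≤ Module.finrank ℂ ↥(P m ⊔ T) := by
            have := Submodule.finrank_lt_finrank_of_lt hTlt
            omega
          have hQ1 : Module.finrank ℂ ↥(P m ⊓ T) ≤ 1 :=
            rank_inf_le_one (hP2 m hm) hT3 h4
          have hil : P m ⊓ P i₀ ≤ P m ⊓ T := inf_le_inf le_rfl le_sup_left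
          have hjl : P m ⊓ P j₀ ≤ P m ⊓ T := inf_le_inf le_rfl le_sup_right
          have hi1 := hinf1 m hm i₀ hi₀
          have hj1 := hinf1 m hm j₀ hj₀S
          have heqi : P m ⊓ P i₀ = P m ⊓ T := eq_inf_of_rank hil hi1 hQ1
          have heqj : P m ⊓ P j₀ = P m ⊓ T := eq_inf_of_rank hjl hj1 hQ1
          have hQl : P m ⊓ T ≤ ℓ := by
            rw [hldef]
            exact le_inf (heqi ▸ inf_le_right) (heqj ▸ inf_le_right)
          exact eq_inf_of_rank hQl (heqi ▸ hi1) (le_of_eq hl1)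
        by_cases hout : ∃ k ∈ S, ¬ P k ≤ T
        · obtain ⟨k₀, hk₀S, hk₀T⟩ := hout
          have hk := key k₀ hk₀S hk₀T
          have hlall : ∀ m ∈ S, ℓ ≤ P m := by
            intro m hm
            by_cases hmT : P m ≤ T
            · have h2 : P m ⊓ P k₀ ≤ ℓ := by
                rw [← hk]
                exact le_inf inf_le_right (le_trans inf_le_left hmT)
              have h1 := hinf1 m hm k₀ hk₀S
              have : P m ⊓ P k₀ = ℓ := eq_inf_of_rank h2 h1 (le_of_eq hl1)
              rw [← this]
              exact inf_le_left
            · rw [← key m hm hmT]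
              exact inf_le_left
          obtain ⟨φ₀, hφ₀l, hφ₀ne⟩ := sub_ne_bot (le_of_eq hl1.symm)
          exact ⟨φ₀, fun m hm => ⟨hφ₀ne, hlall m hm hφ₀l⟩⟩
        · push_neg at hout
          by_cases hl : ∀ m ∈ S, ℓ ≤ P m
          · obtain ⟨φ₀, hφ₀l, hφ₀ne⟩ := sub_ne_bot (le_of_eq hl1.symm)
            exact ⟨φ₀, fun m hm => ⟨hφ₀ne, hl m hm hφ₀l⟩⟩
          · -- counting contradiction
            exfalso
            push_neg at hl
            obtain ⟨m₀, hm₀S, hm₀l⟩ := hl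
            -- the three indices are distinct
            have hne1 : i₀ ≠ j₀ := fun h => hj₀ne (h ▸ rfl)
            have hne2 : m₀ ≠ i₀ := fun h => hm₀l (h ▸ inf_le_left)
            have hne3 : m₀ ≠ j₀ := fun h => hm₀l (h ▸ inf_le_right)
            have hcardS : 3 ≤ S.toFinset.card := by
              have hsub : ({i₀, j₀, m₀} : Finset (Fin v)) ⊆ S.toFinset := by
                intro k hk
                simp only [Finset.mem_insert, Finset.mem_singleton] at hk
                rw [Set.mem_toFinset]
                rcases hk with rfl | rfl | rfl
                exacts [hi₀, hj₀S, hm₀S]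
              have hcard3 : ({i₀, j₀, m₀} : Finset (Fin v)).card = 3 := by
                rw [Finset.card_insert_of_notMem (by simp [hne1, Ne.symm hne2]),
                  Finset.card_insert_of_notMem (by simp [Ne.symm hne3])]
                simp
              rw [← hcard3]
              exact Finset.card_le_card hsub
            -- pick generators for bad planes
            set w : Fin v → Module.Dual ℂ V :=
              fun k => if ∃ c : ℂ, x k = c • y k then y k else x k with hwdef
            have hwspan : ∀ k, k ∉ S → P k ≤ Submodule.span ℂ {w k} := by
              intro k hk
              have hxy : x k ∈ Submodule.span ℂ {w k} ∧ y k ∈ Submodule.span ℂ {w k} := by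
                by_cases hcc : ∃ c : ℂ, x k = c • y k
                · have hw : w k = y k := by rw [hwdef]; exact if_pos hcc
                  obtain ⟨c, hc⟩ := hcc
                  rw [hw]
                  constructor
                  · rw [hc]
                    exact Submodule.smul_mem _ _ (Submodule.mem_span_singleton_self _)
                  · exact Submodule.mem_span_singleton_self _
                · have hw : w k = x k := by rw [hwdef]; exact if_neg hcc
                  rcases dep_pair (show ¬ LinearIndependent ℂ ![x k, y k] from hk)
                    with h | ⟨c, hc⟩
                  · exact absurd h hcc
                  · rw [hw]
                    constructor
                    · exact Submodule.mem_span_singleton_self _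
                    · rw [hc]
                      exact Submodule.smul_mem _ _ (Submodule.mem_span_singleton_self _)
              have : P k = Submodule.span ℂ {x k, y k} := by rw [hPdef]
              rw [this, Submodule.span_le]
              exact Set.insert_subset_iff.2 ⟨hxy.1, Set.singleton_subset_iff.2 hxy.2⟩
            set Z : Submodule ℂ (Module.Dual ℂ V) :=
              Submodule.span ℂ ↑(Finset.image w Sᶜ.toFinset) with hZdef
            have hPZ : ∀ k, k ∉ S → P k ≤ Z := by
              intro k hk
              refine le_trans (hwspan k hk) (Submodule.span_mono ?_)
              intro z hz
              rcases hz with rfl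
              simp only [Finset.coe_image, Set.mem_image]
              exact ⟨k, by simp [Set.mem_toFinset, hk], rfl⟩
            have hUle : Submodule.span ℂ (Set.range x ∪ Set.range y) ≤ T ⊔ Z := by
              rw [Submodule.span_le]
              rintro z (⟨i, rfl⟩ | ⟨i, rfl⟩)
              · by_cases hi : i ∈ S
                · exact Submodule.mem_sup_left (hout i hi (hxP i))
                · exact Submodule.mem_sup_right (hPZ i hi (hxP i))
              · by_cases hi : i ∈ S
                · exact Submodule.mem_sup_left (hout i hi (hyP i))
                · exact Submodule.mem_sup_right (hPZ i hi (hyP i))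
            have hZcard : Module.finrank ℂ Z ≤ v - 3 := by
              refine le_trans (finrank_span_finset_le_card _) ?_
              refine le_trans Finset.card_image_le ?_
              rw [Set.toFinset_compl, Finset.card_compl]
              simp only [Fintype.card_fin]
              omega
            have hfin : Module.finrank ℂ ↥(Submodule.span ℂ (Set.range x ∪ Set.range y))
                ≤ Module.finrank ℂ ↥(T ⊔ Z) := Submodule.finrank_mono hUle
            have hTZ : Module.finrank ℂ ↥(T ⊔ Z) ≤
                Module.finrank ℂ T + Module.finrank ℂ Z :=
              Submodule.finrank_add_le_finrank_add_finrank T Z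
            rw [hgen] at hfin
            rw [hT3] at hTZ
            have hv3 : 3 ≤ v := le_trans hcardS (by simpa using Finset.card_le_univ S.toFinset)
            omega
  -- Conclude
  obtain ⟨φ₀, hφ₀⟩ := main
  have hrep : ∀ i : Fin v, ∃ ψ : Module.Dual ℂ V,
      ExteriorAlgebra.ι ℂ (x i) * ExteriorAlgebra.ι ℂ (y i)
        = ExteriorAlgebra.ι ℂ φ₀ * ExteriorAlgebra.ι ℂ ψ := by
    intro i
    by_cases hi : i ∈ S
    · obtain ⟨hne, hmem⟩ := hφ₀ i hi
      exact wedge_repr hmem hne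
    · refine ⟨0, ?_⟩
      rw [wedge_zero_of_dep (show ¬ LinearIndependent ℂ ![x i, y i] from hi)]
      simp
  choose φ hφ using hrep
  exact ⟨φ₀, φ, hφ⟩
end
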